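/- Let A, B be n×n positive semidefinite matrices with ‖A+B‖ ≤ 1+ε₁, ‖B‖ ≥ 1, tr(Π^{A+B}A) ≥ ε·tr(Π^{A+B}(A+B)), and tr(Π^B B) ≥ (1-ε₁⁹)·tr(Π^{A+B}(A+B)). Then N_{1-ε'}(A+B) > (1 + 2ε/5)·N₁(A+B), where ε' = ε₀/(1+ε₀). -/

import Mathlib

open scoped ComplexOrder

/-- The `ℓ²`-operator norm of a complex square matrix. -/
noncomputable def opNorm {n : ℕ} (M : Matrix (Fin n) (Fin n) ℂ) : ℝ :=
  ‖Matrix.toEuclideanCLM (𝕜 := ℂ) M‖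

/-- The spectral projection of a Hermitian matrix onto the span of its
eigenvectors with eigenvalue at least `1`. -/
noncomputable def specProj {n : ℕ} {M : Matrix (Fin n) (Fin n) ℂ}
    (hM : M.IsHermitian) : Matrix (Fin n) (Fin n) ℂ :=
  ∑ i ∈ Finset.univ.filter (fun i => 1 ≤ hM.eigenvalues i),
    Matrix.vecMulVec (hM.eigenvectorBasis i) (star (hM.eigenvectorBasis i))

/-- `N_l(M)`: the sum of the eigenvalues of a Hermitian matrix `M` that are at
least `l`. -/
noncomputable def sumEigAbove {n : ℕ} {M : Matrix (Fin n) (Fin n) ℂ}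
    (hM : M.IsHermitian) (l : ℝ) : ℝ :=
  ∑ i ∈ Finset.univ.filter (fun i => l ≤ hM.eigenvalues i), hM.eigenvalues i

/-!
Let `S = A + B` have eigenpairs `(λᵢ, uᵢ)` and `B` eigenpairs `(μⱼ, vⱼ)`, and let
`wᵢ = ∑_{μⱼ ≥ 1} ‖⟪vⱼ, uᵢ⟫‖²` be the weight of `uᵢ` on the top eigenspace of `B`. The weights lie in
`[0, 1]` and add up to `m = #{μⱼ ≥ 1}`. Because `B ≤ S`:
* `N₁(B) ≤ ∑ λᵢ wᵢ`, and `m ≤ #{λᵢ ≥ 1}` by a dimension count;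
* `wᵢ ≤ ⟪uᵢ, B uᵢ⟫ = λᵢ - ⟪uᵢ, A uᵢ⟫`, so the hypothesis on `tr(Π^S A)` leaves weight at most
  `(1 - ε) N₁(S)` on the eigenvectors with `λᵢ ≥ 1`.
Bounding `λᵢ wᵢ` on the three ranges `λᵢ ≥ 1`, `1 - ε' ≤ λᵢ < 1` and `λᵢ < 1 - ε'`, the hypothesis
`N₁(B) ≥ (1 - ε₁⁹) N₁(S)` forces weight about `ε N₁(S)` into the window `[1 - ε', 1)`, and these
eigenvalues add at least `1 - ε'` times that weight to `N_{1-ε'}(S)`. The choice `ln n ≥ 300`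
makes `ε₁` and `ε₁⁹ / ε'` small compared with `ε`.
-/

open Matrix Finset
open scoped InnerProductSpace MatrixOrder

theorem Submodule.exists_mem_inf_ne_zero_of_finrank_lt {K V : Type*} [DivisionRing K]
    [AddCommGroup V] [Module K V] [FiniteDimensional K V] {s t : Submodule K V}
    (h : Module.finrank K V < Module.finrank K s + Module.finrank K t) :
    ∃ x ∈ s ⊓ t, x ≠ 0 :=
  Submodule.exists_mem_ne_zero_of_ne_bot fun hbot =>
    h.not_ge (Submodule.finrank_add_finrank_le_of_disjoint (disjoint_iff.mpr hbot))

section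

variable {𝕜 E : Type*} [RCLike 𝕜] [NormedAddCommGroup E] [InnerProductSpace 𝕜 E]

theorem ContinuousLinearMap.re_inner_apply_self_le (T : E →L[𝕜] E) (x : E) :
    RCLike.re ⟪x, T x⟫_𝕜 ≤ ‖T‖ * ‖x‖ ^ 2 :=
  calc RCLike.re ⟪x, T x⟫_𝕜 ≤ ‖x‖ * ‖T x‖ := re_inner_le_norm x (T x)
    _ ≤ ‖x‖ * (‖T‖ * ‖x‖) := by gcongr; exact T.le_opNorm x
    _ = ‖T‖ * ‖x‖ ^ 2 := by ring

theorem OrthonormalBasis.inner_eq_zero_of_mem_span {ι : Type*} [Fintype ι]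
    (b : OrthonormalBasis ι 𝕜 E) {p : ι → Prop} {x : E}
    (hx : x ∈ Submodule.span 𝕜 (Set.range fun j : {j // p j} => b j)) {i : ι} (hi : ¬ p i) :
    ⟪b i, x⟫_𝕜 = 0 := by
  suffices Submodule.span 𝕜 (Set.range fun j : {j // p j} => b j) ≤
      LinearMap.ker (innerₛₗ 𝕜 (b i)) from this hx
  rw [Submodule.span_le]
  rintro _ ⟨j, rfl⟩
  exact b.orthonormal.2 fun hij => hi (hij ▸ j.2)

theorem OrthonormalBasis.finrank_span_range_subtype {ι : Type*} [Fintype ι]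
    (b : OrthonormalBasis ι 𝕜 E) (p : ι → Prop) [DecidablePred p] :
    Module.finrank 𝕜 (Submodule.span 𝕜 (Set.range fun j : {j // p j} => b j)) = #{j | p j} :=
  (finrank_span_eq_card ((b.orthonormal.comp _ Subtype.val_injective).linearIndependent)).trans
    (Fintype.card_subtype p)

theorem OrthonormalBasis.sum_sum_sq_norm_inner {ι κ : Type*} [Fintype ι] [Fintype κ]
    (b : OrthonormalBasis ι 𝕜 E) (b' : OrthonormalBasis κ 𝕜 E) (s : Finset κ) :
    ∑ i, ∑ j ∈ s, ‖⟪b' j, b i⟫_𝕜‖ ^ 2 = #s := by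
  rw [Finset.sum_comm]
  simp [b.sum_sq_norm_inner_left, b'.orthonormal.1]

end

namespace Matrix.IsHermitian

variable {𝕜 ι : Type*} [RCLike 𝕜] [Fintype ι] [DecidableEq ι] {M : Matrix ι ι 𝕜}

theorem inner_toEuclideanCLM_left (hM : M.IsHermitian) (x y : EuclideanSpace 𝕜 ι) :
    ⟪toEuclideanCLM (𝕜 := 𝕜) M x, y⟫_𝕜 = ⟪x, toEuclideanCLM (𝕜 := 𝕜) M y⟫_𝕜 :=
  isSymmetric_toEuclideanLin_iff.mpr hM x y

theorem toEuclideanCLM_eigenvectorBasis (hM : M.IsHermitian) (i : ι) :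
    toEuclideanCLM (𝕜 := 𝕜) M (hM.eigenvectorBasis i) =
      (hM.eigenvalues i : 𝕜) • hM.eigenvectorBasis i := by
  ext1
  rw [ofLp_toEuclideanCLM, hM.mulVec_eigenvectorBasis, WithLp.ofLp_smul,
    RCLike.real_smul_eq_coe_smul (K := 𝕜)]

theorem inner_eigenvectorBasis_toEuclideanCLM (hM : M.IsHermitian) (i : ι)
    (x : EuclideanSpace 𝕜 ι) :
    ⟪hM.eigenvectorBasis i, toEuclideanCLM (𝕜 := 𝕜) M x⟫_𝕜 =
      hM.eigenvalues i * ⟪hM.eigenvectorBasis i, x⟫_𝕜 := by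
  rw [← hM.inner_toEuclideanCLM_left, toEuclideanCLM_eigenvectorBasis, inner_smul_left,
    RCLike.conj_ofReal]

theorem re_inner_toEuclideanCLM_self (hM : M.IsHermitian) (x : EuclideanSpace 𝕜 ι) :
    RCLike.re ⟪x, toEuclideanCLM (𝕜 := 𝕜) M x⟫_𝕜 =
      ∑ i, hM.eigenvalues i * ‖⟪hM.eigenvectorBasis i, x⟫_𝕜‖ ^ 2 := by
  rw [← hM.eigenvectorBasis.sum_inner_mul_inner, map_sum]
  refine Finset.sum_congr rfl fun i _ => ?_
  rw [hM.inner_eigenvectorBasis_toEuclideanCLM, ← inner_conj_symm, mul_left_comm,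
    RCLike.conj_mul, ← RCLike.ofReal_pow, ← RCLike.ofReal_mul, RCLike.ofReal_re]

theorem eigenvalues_eq_re_inner (hM : M.IsHermitian) (i : ι) :
    hM.eigenvalues i =
      RCLike.re ⟪hM.eigenvectorBasis i, toEuclideanCLM (𝕜 := 𝕜) M (hM.eigenvectorBasis i)⟫_𝕜 := by
  rw [hM.inner_eigenvectorBasis_toEuclideanCLM, inner_self_eq_norm_sq_to_K,
    hM.eigenvectorBasis.orthonormal.1 i]
  simp

theorem norm_toEuclideanCLM_apply_sq (hM : M.IsHermitian) (x : EuclideanSpace 𝕜 ι) :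
    ‖toEuclideanCLM (𝕜 := 𝕜) M x‖ ^ 2 =
      ∑ i, hM.eigenvalues i ^ 2 * ‖⟪hM.eigenvectorBasis i, x⟫_𝕜‖ ^ 2 := by
  simp only [← hM.eigenvectorBasis.sum_sq_norm_inner_right, inner_eigenvectorBasis_toEuclideanCLM,
    norm_mul, RCLike.norm_ofReal, mul_pow, sq_abs]

theorem re_inner_toEuclideanCLM_sub_mul_norm_sq (hM : M.IsHermitian) (c : ℝ)
    (x : EuclideanSpace 𝕜 ι) :
    RCLike.re ⟪x, toEuclideanCLM (𝕜 := 𝕜) M x⟫_𝕜 - c * ‖x‖ ^ 2 =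
      ∑ i, (hM.eigenvalues i - c) * ‖⟪hM.eigenvectorBasis i, x⟫_𝕜‖ ^ 2 := by
  simp only [hM.re_inner_toEuclideanCLM_self, ← hM.eigenvectorBasis.sum_sq_norm_inner_right,
    Finset.mul_sum, sub_mul, Finset.sum_sub_distrib]

theorem opNorm_toEuclideanCLM_le (hM : M.IsHermitian) {C : ℝ} (hC : 0 ≤ C)
    (h : ∀ i, |hM.eigenvalues i| ≤ C) : ‖toEuclideanCLM (𝕜 := 𝕜) M‖ ≤ C := by
  refine ContinuousLinearMap.opNorm_le_bound _ hC fun x => ?_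
  refine (sq_le_sq₀ (norm_nonneg _) (by positivity)).mp ?_
  rw [hM.norm_toEuclideanCLM_apply_sq, mul_pow, ← hM.eigenvectorBasis.sum_sq_norm_inner_right,
    Finset.mul_sum]
  refine Finset.sum_le_sum fun i _ => mul_le_mul_of_nonneg_right ?_ (by positivity)
  rw [← sq_abs]
  exact pow_le_pow_left₀ (abs_nonneg _) (h i) 2

theorem exists_le_abs_eigenvalues (hM : M.IsHermitian) {c : ℝ} (hc : 0 < c)
    (h : c ≤ ‖toEuclideanCLM (𝕜 := 𝕜) M‖) : ∃ i, c ≤ |hM.eigenvalues i| := by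
  by_contra! hlt
  obtain ⟨C, hC0, hCc, hC⟩ : ∃ C, 0 ≤ C ∧ C < c ∧ ∀ i, |hM.eigenvalues i| ≤ C := by
    rcases isEmpty_or_nonempty ι with hι | hι
    · exact ⟨0, le_rfl, hc, isEmptyElim⟩
    · obtain ⟨j, hj⟩ := Finite.exists_max fun i => |hM.eigenvalues i|
      exact ⟨_, abs_nonneg _, hlt j, hj⟩
  exact (h.trans (hM.opNorm_toEuclideanCLM_le hC0 hC)).not_gt hCc

theorem mul_norm_sq_le_re_inner_of_mem_span (hM : M.IsHermitian) {c : ℝ}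
    {x : EuclideanSpace 𝕜 ι} (hx : x ∈ Submodule.span 𝕜
      (Set.range fun i : {i // c ≤ hM.eigenvalues i} => hM.eigenvectorBasis i)) :
    c * ‖x‖ ^ 2 ≤ RCLike.re ⟪x, toEuclideanCLM (𝕜 := 𝕜) M x⟫_𝕜 := by
  rw [← sub_nonneg, hM.re_inner_toEuclideanCLM_sub_mul_norm_sq]
  refine Finset.sum_nonneg fun i _ => ?_
  by_cases hi : c ≤ hM.eigenvalues i
  · exact mul_nonneg (sub_nonneg.mpr hi) (by positivity)
  · simp [hM.eigenvectorBasis.inner_eq_zero_of_mem_span hx hi]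

theorem re_inner_lt_mul_norm_sq_of_mem_span (hM : M.IsHermitian) {c : ℝ}
    {x : EuclideanSpace 𝕜 ι} (hx : x ∈ Submodule.span 𝕜
      (Set.range fun i : {i // hM.eigenvalues i < c} => hM.eigenvectorBasis i)) (hx0 : x ≠ 0) :
    RCLike.re ⟪x, toEuclideanCLM (𝕜 := 𝕜) M x⟫_𝕜 < c * ‖x‖ ^ 2 := by
  have hcoeff : ∀ i, hM.eigenvalues i < c ∨ ⟪hM.eigenvectorBasis i, x⟫_𝕜 = 0 := fun i =>
    or_iff_not_imp_left.mpr (hM.eigenvectorBasis.inner_eq_zero_of_mem_span hx)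
  obtain ⟨i₀, hi₀⟩ : ∃ i, ⟪hM.eigenvectorBasis i, x⟫_𝕜 ≠ 0 := by
    by_contra! h
    exact hx0 (by simpa [h] using (hM.eigenvectorBasis.sum_repr' x).symm)
  rw [← sub_neg, hM.re_inner_toEuclideanCLM_sub_mul_norm_sq]
  refine Finset.sum_neg' (fun i _ => ?_) ⟨i₀, mem_univ _, ?_⟩
  · rcases hcoeff i with h | h
    · exact mul_nonpos_of_nonpos_of_nonneg (by linarith) (by positivity)
    · simp [h]
  · exact mul_neg_of_neg_of_pos (sub_neg.mpr ((hcoeff i₀).resolve_right hi₀))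
      (pow_pos (norm_pos_iff.mpr hi₀) 2)

end Matrix.IsHermitian

namespace Matrix

variable {𝕜 ι : Type*} [RCLike 𝕜] [Fintype ι] [DecidableEq ι] {B S : Matrix ι ι 𝕜}

theorem re_inner_toEuclideanCLM_le_of_le (h : B ≤ S) (x : EuclideanSpace 𝕜 ι) :
    RCLike.re ⟪x, toEuclideanCLM (𝕜 := 𝕜) B x⟫_𝕜 ≤
      RCLike.re ⟪x, toEuclideanCLM (𝕜 := 𝕜) S x⟫_𝕜 := by
  have := (isPositive_toEuclideanLin_iff.mpr (le_iff.mp h)).re_inner_nonneg_right x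
  rwa [map_sub, LinearMap.sub_apply, inner_sub_right, map_sub, sub_nonneg] at this

theorem IsHermitian.card_filter_le_eigenvalues_le_of_le (hB : B.IsHermitian) (hS : S.IsHermitian)
    (h : B ≤ S) (c : ℝ) : #{j | c ≤ hB.eigenvalues j} ≤ #{i | c ≤ hS.eigenvalues i} := by
  by_contra! hlt
  set V := Submodule.span 𝕜
    (Set.range fun j : {j // c ≤ hB.eigenvalues j} => hB.eigenvectorBasis j)
  set W := Submodule.span 𝕜
    (Set.range fun i : {i // hS.eigenvalues i < c} => hS.eigenvectorBasis i)
  have hdim : Module.finrank 𝕜 (EuclideanSpace 𝕜 ι) <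
      Module.finrank 𝕜 V + Module.finrank 𝕜 W := by
    have hsplit := card_filter_add_card_filter_not (s := univ) fun i => c ≤ hS.eigenvalues i
    simp only [not_le] at hsplit
    rw [hB.eigenvectorBasis.finrank_span_range_subtype,
      hS.eigenvectorBasis.finrank_span_range_subtype, finrank_euclideanSpace, ← card_univ]
    omega
  obtain ⟨x, ⟨hxV, hxW⟩, hx0⟩ := Submodule.exists_mem_inf_ne_zero_of_finrank_lt hdim
  have := hB.mul_norm_sq_le_re_inner_of_mem_span hxV
  have := hS.re_inner_lt_mul_norm_sq_of_mem_span hxW hx0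
  have := re_inner_toEuclideanCLM_le_of_le h x
  linarith

theorem IsHermitian.eigenvalues_le_opNorm_of_le (hB : B.IsHermitian) (h : B ≤ S) (j : ι) :
    hB.eigenvalues j ≤ ‖toEuclideanCLM (𝕜 := 𝕜) S‖ := by
  have := (toEuclideanCLM (𝕜 := 𝕜) S).re_inner_apply_self_le (hB.eigenvectorBasis j)
  rw [hB.eigenvectorBasis.orthonormal.1 j, one_pow, mul_one] at this
  exact hB.eigenvalues_eq_re_inner j ▸ (re_inner_toEuclideanCLM_le_of_le h _).trans this

noncomputable def IsHermitian.weightAbove (hB : B.IsHermitian) (hS : S.IsHermitian) (c : ℝ)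
    (i : ι) : ℝ :=
  ∑ j with c ≤ hB.eigenvalues j, ‖⟪hB.eigenvectorBasis j, hS.eigenvectorBasis i⟫_𝕜‖ ^ 2

theorem PosSemidef.mul_weightAbove_le_re_inner (hB : B.PosSemidef) (hS : S.IsHermitian) (c : ℝ)
    (i : ι) :
    c * hB.1.weightAbove hS c i ≤
      RCLike.re ⟪hS.eigenvectorBasis i, toEuclideanCLM (𝕜 := 𝕜) B (hS.eigenvectorBasis i)⟫_𝕜 := by
  rw [hB.1.re_inner_toEuclideanCLM_self, IsHermitian.weightAbove, Finset.mul_sum]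
  calc _ ≤ ∑ j with c ≤ hB.1.eigenvalues j,
        hB.1.eigenvalues j * ‖⟪hB.1.eigenvectorBasis j, hS.eigenvectorBasis i⟫_𝕜‖ ^ 2 :=
        Finset.sum_le_sum fun j hj =>
          mul_le_mul_of_nonneg_right (mem_filter.mp hj).2 (by positivity)
    _ ≤ _ := Finset.sum_le_sum_of_subset_of_nonneg (filter_subset _ _) fun j _ _ =>
        mul_nonneg (hB.eigenvalues_nonneg j) (by positivity)

namespace IsHermitian

variable (hB : B.IsHermitian) (hS : S.IsHermitian) (c : ℝ)

theorem weightAbove_nonneg (i : ι) : 0 ≤ hB.weightAbove hS c i :=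
  Finset.sum_nonneg fun _ _ => by positivity

theorem weightAbove_le_one (i : ι) : hB.weightAbove hS c i ≤ 1 := by
  have := hB.eigenvectorBasis.orthonormal.sum_inner_products_le (hS.eigenvectorBasis i)
    (s := {j | c ≤ hB.eigenvalues j})
  rwa [hS.eigenvectorBasis.orthonormal.1 i, one_pow] at this

theorem sum_weightAbove : ∑ i, hB.weightAbove hS c i = #{j | c ≤ hB.eigenvalues j} :=
  hS.eigenvectorBasis.sum_sum_sq_norm_inner hB.eigenvectorBasis _

theorem sum_eigenvalues_le_sum_mul_weightAbove (h : B ≤ S) :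
    ∑ j with c ≤ hB.eigenvalues j, hB.eigenvalues j ≤
      ∑ i, hS.eigenvalues i * hB.weightAbove hS c i := by
  calc ∑ j with c ≤ hB.eigenvalues j, hB.eigenvalues j
      ≤ ∑ j with c ≤ hB.eigenvalues j, RCLike.re
          ⟪hB.eigenvectorBasis j, toEuclideanCLM (𝕜 := 𝕜) S (hB.eigenvectorBasis j)⟫_𝕜 :=
        Finset.sum_le_sum fun j _ =>
          hB.eigenvalues_eq_re_inner j ▸ re_inner_toEuclideanCLM_le_of_le h _
    _ = ∑ i, hS.eigenvalues i * hB.weightAbove hS c i := by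
        simp only [hS.re_inner_toEuclideanCLM_self, weightAbove, Finset.mul_sum, norm_inner_symm]
        exact Finset.sum_comm

end IsHermitian

end Matrix

section WeightedSums

variable {ι : Type*} [Fintype ι] (lam w : ι → ℝ)

theorem sum_mul_le_of_weights (hw0 : ∀ i, 0 ≤ w i) (hw1 : ∀ i, w i ≤ 1) (δ : ℝ) :
    ∑ i, lam i * w i ≤ ∑ i with 1 ≤ lam i, (lam i - 1) + (1 - δ) * ∑ i, w i +
      δ * (∑ i with 1 ≤ lam i, w i + ∑ i with 1 - δ ≤ lam i ∧ lam i < 1, w i) := by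
  simp only [sum_filter, mul_sum, ← sum_add_distrib]
  refine sum_le_sum fun i _ => ?_
  have := hw0 i
  have := hw1 i
  by_cases h1 : 1 ≤ lam i
  · simp only [h1, if_true, h1.not_gt, and_false, if_false]
    nlinarith
  · by_cases h2 : 1 - δ ≤ lam i
    · simp only [h1, h2, not_le.mp h1, and_self, if_true, if_false]
      nlinarith
    · simp only [h1, h2, false_and, if_false]
      nlinarith

theorem sum_filter_one_add_mul_le (hw1 : ∀ i, w i ≤ 1) {l : ℝ} (hl0 : 0 ≤ l) (hl1 : l ≤ 1) :
    ∑ i with 1 ≤ lam i, lam i + l * ∑ i with l ≤ lam i ∧ lam i < 1, w i ≤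
      ∑ i with l ≤ lam i, lam i := by
  simp only [sum_filter, mul_sum, ← sum_add_distrib]
  refine sum_le_sum fun i _ => ?_
  have := hw1 i
  split_ifs <;> nlinarith

end WeightedSums

theorem small_parameters {L ε ε₀ ε₁ ε' : ℝ} (hL : 300 ≤ L) (hε : 0 < ε) (hε1 : ε ≤ 1 / 2)
    (hε₀ : ε₀ = ε ^ 2 / L ^ 2) (hε₁ : ε₁ = 3 * ε / L) (hε' : ε' = ε₀ / (1 + ε₀)) :
    0 < ε' ∧ ε' ≤ 1 / 100 ∧ 0 ≤ ε₁ ∧ ε₁ ≤ ε / 100 ∧ ε₁ ^ 9 ≤ ε' * ε / 100 := by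
  set a := ε / L
  have ha0 : 0 < a := by positivity
  have haε : a ≤ ε / 300 := div_le_div_of_nonneg_left hε.le (by norm_num) hL
  have hε₀a : ε₀ = a ^ 2 := by rw [hε₀, div_pow]
  have hε₁a : ε₁ = 3 * a := by rw [hε₁, mul_div_assoc]
  have hε'a : a ^ 2 / 2 ≤ ε' := by
    rw [hε', hε₀a]
    exact div_le_div_of_nonneg_left (by positivity) (by positivity) (by nlinarith)
  have hε'a' : ε' ≤ a ^ 2 := by
    rw [hε', hε₀a]
    exact div_le_self (by positivity) (by nlinarith)
  have ha7 : a ^ 7 ≤ (1 / 600) ^ 6 * (ε / 300) :=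
    calc a ^ 7 = a ^ 6 * a := by ring
      _ ≤ (1 / 600) ^ 6 * (ε / 300) := by gcongr; linarith
  refine ⟨lt_of_lt_of_le (by positivity) hε'a, by nlinarith, by rw [hε₁a]; positivity,
    by rw [hε₁a]; linarith, ?_⟩
  calc ε₁ ^ 9 = 19683 * a ^ 2 * a ^ 7 := by rw [hε₁a]; ring
    _ ≤ 19683 * a ^ 2 * ((1 / 600) ^ 6 * (ε / 300)) := by gcongr
    _ ≤ a ^ 2 / 2 * ε / 100 := by nlinarith [sq_nonneg a]
    _ ≤ ε' * ε / 100 := by gcongr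

theorem gain_of_bounds {ε ε₁ ε' N Nb m t s : ℝ} (hε : 0 < ε) (hε'0 : 0 < ε') (hε'1 : ε' ≤ 1 / 100)
    (hε₁0 : 0 ≤ ε₁) (hε₁ : ε₁ ≤ ε / 100) (hε₁9 : ε₁ ^ 9 ≤ ε' * ε / 100) (hN : 0 < N)
    (hNb : (1 - ε₁ ^ 9) * N ≤ Nb) (hm : Nb ≤ (1 + ε₁) * m) (ht : t ≤ (1 - ε) * N)
    (hmain : Nb ≤ N - ε' * (m - t - s)) :
    (1 + 2 * ε / 5) * N < N + (1 - ε') * s := by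
  have hm' : (1 - ε₁ - ε₁ ^ 9) * N ≤ m := by
    refine le_of_mul_le_mul_left ?_ (by linarith : 0 < 1 + ε₁)
    nlinarith [mul_nonneg (pow_nonneg hε₁0 2) hN.le, mul_nonneg (pow_nonneg hε₁0 10) hN.le]
  have hgap : ε' * (m - t - s) ≤ ε' * (ε * N / 100) := by nlinarith
  have hε₁N : ε₁ * N ≤ ε / 100 * N := by gcongr
  have hε₁9N : ε₁ ^ 9 * N ≤ ε / 100 * N := by gcongr; nlinarith
  have hs : (97 / 100) * (ε * N) ≤ s := by
    have := le_of_mul_le_mul_left hgap hε'0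
    nlinarith
  nlinarith [mul_pos hε hN]

section SpectralProjection

variable {n : ℕ} {M : Matrix (Fin n) (Fin n) ℂ}

theorem trace_specProj_mul (hM : M.IsHermitian) (N : Matrix (Fin n) (Fin n) ℂ) :
    (specProj hM * N).trace = ∑ i with 1 ≤ hM.eigenvalues i,
      ⟪hM.eigenvectorBasis i, toEuclideanCLM (𝕜 := ℂ) N (hM.eigenvectorBasis i)⟫_ℂ := by
  rw [specProj, Matrix.sum_mul, trace_sum]
  refine Finset.sum_congr rfl fun i _ => ?_
  rw [vecMulVec_mul, trace_vecMulVec, EuclideanSpace.inner_eq_star_dotProduct,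
    ofLp_toEuclideanCLM, dotProduct_comm, ← dotProduct_mulVec, dotProduct_comm]

theorem re_trace_specProj_mul (hM : M.IsHermitian) (N : Matrix (Fin n) (Fin n) ℂ) :
    (specProj hM * N).trace.re = ∑ i with 1 ≤ hM.eigenvalues i,
      (⟪hM.eigenvectorBasis i, toEuclideanCLM (𝕜 := ℂ) N (hM.eigenvectorBasis i)⟫_ℂ).re := by
  rw [trace_specProj_mul, Complex.re_sum]

theorem re_trace_specProj_mul_self (hM : M.IsHermitian) :
    (specProj hM * M).trace.re = sumEigAbove hM 1 := by
  rw [re_trace_specProj_mul, sumEigAbove]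
  exact Finset.sum_congr rfl fun i _ => (hM.eigenvalues_eq_re_inner i).symm

end SpectralProjection

section SumEigAbove

variable {n : ℕ} {M B S : Matrix (Fin n) (Fin n) ℂ}

theorem card_filter_le_sumEigAbove (hM : M.IsHermitian) :
    (#{i | 1 ≤ hM.eigenvalues i} : ℝ) ≤ sumEigAbove hM 1 := by
  simpa [sumEigAbove] using card_nsmul_le_sum {i | 1 ≤ hM.eigenvalues i} hM.eigenvalues 1
    fun i hi => (mem_filter.mp hi).2

theorem sumEigAbove_le_mul_card_of_le (hB : B.IsHermitian) (hBS : B ≤ S) {C : ℝ}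
    (hC : opNorm S ≤ C) : sumEigAbove hB 1 ≤ C * #{j | 1 ≤ hB.eigenvalues j} := by
  have := sum_le_card_nsmul {j | 1 ≤ hB.eigenvalues j} hB.eigenvalues C
    fun j _ => (hB.eigenvalues_le_opNorm_of_le hBS j).trans hC
  rwa [nsmul_eq_mul, mul_comm] at this

theorem one_le_card_eigenvalues_of_one_le_opNorm (hB : B.PosSemidef) (h : 1 ≤ opNorm B) :
    1 ≤ #{j | 1 ≤ hB.1.eigenvalues j} := by
  obtain ⟨j, hj⟩ := hB.1.exists_le_abs_eigenvalues one_pos h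
  exact card_pos.mpr
    ⟨j, mem_filter.mpr ⟨mem_univ j, abs_of_nonneg (hB.eigenvalues_nonneg j) ▸ hj⟩⟩

end SumEigAbove

section SumOfPositiveMatrices

variable {n : ℕ} {A B : Matrix (Fin n) (Fin n) ℂ}

theorem sum_weightAbove_le_sub_re_trace (hB : B.PosSemidef) (hAB : (A + B).IsHermitian) :
    ∑ i with 1 ≤ hAB.eigenvalues i, hB.1.weightAbove hAB 1 i ≤
      sumEigAbove hAB 1 - (specProj hAB * A).trace.re := by
  rw [← re_trace_specProj_mul_self, re_trace_specProj_mul, re_trace_specProj_mul,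
    ← sum_sub_distrib]
  refine sum_le_sum fun i _ => ?_
  rw [map_add, _root_.add_apply, inner_add_right, Complex.add_re, add_sub_cancel_left]
  simpa using hB.mul_weightAbove_le_re_inner hAB 1 i

theorem sumEigAbove_le_sub_mul_sum_weightAbove (hA : A.PosSemidef) (hB : B.PosSemidef)
    (hAB : (A + B).IsHermitian) (δ : ℝ) :
    sumEigAbove hB.1 1 ≤ sumEigAbove hAB 1 - δ * (#{j | 1 ≤ hB.1.eigenvalues j} -
      ∑ i with 1 ≤ hAB.eigenvalues i, hB.1.weightAbove hAB 1 i -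
      ∑ i with 1 - δ ≤ hAB.eigenvalues i ∧ hAB.eigenvalues i < 1, hB.1.weightAbove hAB 1 i) := by
  have hBS : B ≤ A + B := le_add_of_nonneg_left hA.nonneg
  have hweights := sum_mul_le_of_weights hAB.eigenvalues _ (hB.1.weightAbove_nonneg hAB 1)
    (hB.1.weightAbove_le_one hAB 1) δ
  rw [hB.1.sum_weightAbove, sum_sub_distrib, sum_const, nsmul_one] at hweights
  have hcard : (#{j | 1 ≤ hB.1.eigenvalues j} : ℝ) ≤ #{i | 1 ≤ hAB.eigenvalues i} := by
    exact_mod_cast hB.1.card_filter_le_eigenvalues_le_of_le hAB hBS 1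
  have := hB.1.sum_eigenvalues_le_sum_mul_weightAbove hAB 1 hBS
  unfold sumEigAbove
  linarith

end SumOfPositiveMatrices

/-- **main spectral lemma.** For sufficiently small `ε > 0` and
sufficiently large `n`, with `ε₀ = ε²/ln²n`, `ε₁ = 3ε/ln n`, `ε' = ε₀/(1+ε₀)`:
if `A, B` are `n × n` positive semidefinite matrices with `‖A+B‖ ≤ 1+ε₁`,
`‖B‖ ≥ 1`, `tr(Π^{A+B} A) ≥ ε tr(Π^{A+B}(A+B))` and
`tr(Π^B B) ≥ (1-ε₁⁹) tr(Π^{A+B}(A+B))`, then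
`N_{1-ε'}(A+B) > (1 + 2ε/5) N₁(A+B)`. -/
theorem main_spectral_lemma :
    ∃ c : ℝ, 0 < c ∧ ∃ N₀ : ℕ, ∀ n : ℕ, N₀ ≤ n →
      ∀ ε : ℝ, 0 < ε → ε < c →
      ∀ (ε₀ ε₁ ε' : ℝ),
        ε₀ = ε ^ 2 / (Real.log n) ^ 2 →
        ε₁ = 3 * ε / Real.log n →
        ε' = ε₀ / (1 + ε₀) →
      ∀ (A B : Matrix (Fin n) (Fin n) ℂ)
        (hA : A.PosSemidef) (hB : B.PosSemidef) (hAB : (A + B).IsHermitian),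
        opNorm (A + B) ≤ 1 + ε₁ →
        1 ≤ opNorm B →
        ε * ((specProj hAB * (A + B)).trace).re ≤ ((specProj hAB * A).trace).re →
        (1 - ε₁ ^ 9) * ((specProj hAB * (A + B)).trace).re ≤
          ((specProj hB.1 * B).trace).re →
        (1 + 2 * ε / 5) * sumEigAbove hAB 1 < sumEigAbove hAB (1 - ε') := by
  refine ⟨1 / 2, by norm_num, ⌈Real.exp 300⌉₊, fun n hn ε hε hεc ε₀ ε₁ ε' hε₀ hε₁ hε'
    A B hA hB hAB hnorm hBnorm htrA htrB => ?_⟩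
  have hexp : Real.exp 300 ≤ n := Nat.ceil_le.mp hn
  have hL : 300 ≤ Real.log n := (Real.le_log_iff_exp_le ((Real.exp_pos _).trans_le hexp)).mpr hexp
  obtain ⟨hε'0, hε'1, hε₁0, hε₁, hε₁9⟩ := small_parameters hL hε hεc.le hε₀ hε₁ hε'
  simp only [re_trace_specProj_mul_self] at htrA htrB
  have hBS : B ≤ A + B := le_add_of_nonneg_left hA.nonneg
  have hJ : (1 : ℝ) ≤ #{j | 1 ≤ hB.1.eigenvalues j} := by
    exact_mod_cast one_le_card_eigenvalues_of_one_le_opNorm hB hBnorm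
  have hJN : (#{j | 1 ≤ hB.1.eigenvalues j} : ℝ) ≤ sumEigAbove hAB 1 :=
    (Nat.cast_le.mpr (hB.1.card_filter_le_eigenvalues_le_of_le hAB hBS 1)).trans
      (card_filter_le_sumEigAbove hAB)
  have htop := sum_weightAbove_le_sub_re_trace hB hAB
  calc (1 + 2 * ε / 5) * sumEigAbove hAB 1
      < sumEigAbove hAB 1 + (1 - ε') * ∑ i with 1 - ε' ≤ hAB.eigenvalues i ∧
          hAB.eigenvalues i < 1, hB.1.weightAbove hAB 1 i :=
        gain_of_bounds hε hε'0 hε'1 hε₁0 hε₁ hε₁9 (by linarith) htrB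
          (sumEigAbove_le_mul_card_of_le hB.1 hBS hnorm) (by linarith)
          (sumEigAbove_le_sub_mul_sum_weightAbove hA hB hAB ε')
    _ ≤ sumEigAbove hAB (1 - ε') :=
        sum_filter_one_add_mul_le _ _ (hB.1.weightAbove_le_one hAB 1) (by linarith) (by linarith)
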